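/- Let P̄ be a probability measure on a finite product Ω^h = ∏_{k=0}^{N} X_k that is a Markov chain, and let P be defined by dP/dP̄ = exp(Σ_{k=0}^{N−1} f_k(x_k, x_{k+1}))/Z where each f_k depends only on the pair (x_k, x_{k+1}) and Z is the normalizing constant. Then P is also a Markov chain. -/
import Mathlib


open Finset

/-- The Markov property for a (probability) mass function on discrete paths, in
cross-multiplied form (avoiding division by possibly-zero probabilities): for every `k`,
every initial trajectory `x₀,…,x_k` and every `y`,
`P(X₀=x₀,…,X_k=x_k, X_{k+1}=y) · P(X_k=x_k) = P(X_k=x_k, X_{k+1}=y) · P(X₀=x₀,…,X_k=x_k)`. -/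
def IsMarkovChain {X : Type*} [Fintype X] [DecidableEq X] {N : ℕ}
    (p : (Fin (N + 1) → X) → ℝ) : Prop :=
  ∀ (k : Fin N) (x : Fin (N + 1) → X) (y : X),
    (∑ ω ∈ univ.filter (fun ω : Fin (N + 1) → X =>
        (∀ j, j ≤ k.castSucc → ω j = x j) ∧ ω k.succ = y), p ω)
      * (∑ ω ∈ univ.filter (fun ω : Fin (N + 1) → X => ω k.castSucc = x k.castSucc), p ω)
    = (∑ ω ∈ univ.filter (fun ω : Fin (N + 1) → X =>
        ω k.castSucc = x k.castSucc ∧ ω k.succ = y), p ω)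
      * (∑ ω ∈ univ.filter (fun ω : Fin (N + 1) → X => ∀ j, j ≤ k.castSucc → ω j = x j), p ω)

section Aux
variable {X : Type*} [Fintype X] [DecidableEq X] {N : ℕ}

/-- Sum of `pbar` over trajectories agreeing with `ω` on coordinates in `[t, m]`. -/
noncomputable def segS (pbar : (Fin (N + 1) → X) → ℝ) (t m : ℕ) (ω : Fin (N + 1) → X) : ℝ :=
  ∑ ω'' ∈ univ.filter (fun ω'' : Fin (N + 1) → X =>
      ∀ j : Fin (N + 1), t ≤ (j : ℕ) → (j : ℕ) ≤ m → ω'' j = ω j), pbar ω''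

lemma segS_congr (pbar : (Fin (N + 1) → X) → ℝ) {t m : ℕ} {ω ω' : Fin (N + 1) → X}
    (h : ∀ j : Fin (N + 1), t ≤ (j : ℕ) → (j : ℕ) ≤ m → ω j = ω' j) :
    segS pbar t m ω = segS pbar t m ω' := by
  unfold segS
  refine Finset.sum_congr (Finset.filter_congr fun ω'' _ => ?_) fun _ _ => rfl
  constructor
  · intro hh j h1 h2; rw [hh j h1 h2, h j h1 h2]
  · intro hh j h1 h2; rw [hh j h1 h2, h j h1 h2]

lemma segS_zero {pbar : (Fin (N + 1) → X) → ℝ} (hpos : ∀ ω, 0 ≤ pbar ω) {t m : ℕ}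
    {ω ω'' : Fin (N + 1) → X} (h0 : segS pbar t m ω = 0)
    (h : ∀ j : Fin (N + 1), t ≤ (j : ℕ) → (j : ℕ) ≤ m → ω'' j = ω j) : pbar ω'' = 0 := by
  have := (Finset.sum_eq_zero_iff_of_nonneg (fun i _ => hpos i)).1 h0 ω''
  exact this (by simpa using h)

lemma segS_all (pbar : (Fin (N + 1) → X) → ℝ) (ω : Fin (N + 1) → X) :
    segS pbar 0 (N : ℕ) ω = pbar ω := by
  unfold segS
  rw [show (univ.filter (fun ω'' : Fin (N + 1) → X =>
      ∀ j : Fin (N + 1), 0 ≤ (j : ℕ) → (j : ℕ) ≤ N → ω'' j = ω j)) = {ω} from ?_]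
  · simp
  · ext ω''
    simp only [mem_filter, mem_univ, true_and, mem_singleton]
    constructor
    · intro h; funext j; exact h j (Nat.zero_le _) (Nat.lt_succ_iff.mp j.isLt)
    · rintro rfl; intro j _ _; rfl

/-- Translation of the Markov assumption into `segS` form. -/
lemma hm_step {pbar : (Fin (N + 1) → X) → ℝ} (hmarkov : IsMarkovChain pbar)
    {m : ℕ} (hm : m < N) (ω : Fin (N + 1) → X) :
    segS pbar 0 (m + 1) ω * segS pbar m m ω
      = segS pbar m (m + 1) ω * segS pbar 0 m ω := by
  set k : Fin N := ⟨m, hm⟩ with hk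
  have hc : ((k.castSucc : Fin (N + 1)) : ℕ) = m := rfl
  have hs : ((k.succ : Fin (N + 1)) : ℕ) = m + 1 := rfl
  have H := hmarkov k ω (ω k.succ)
  have e1 : (univ.filter (fun ω'' : Fin (N + 1) → X =>
      (∀ j, j ≤ k.castSucc → ω'' j = ω j) ∧ ω'' k.succ = ω k.succ))
      = (univ.filter (fun ω'' : Fin (N + 1) → X =>
        ∀ j : Fin (N + 1), 0 ≤ (j : ℕ) → (j : ℕ) ≤ m + 1 → ω'' j = ω j)) := by
    apply Finset.filter_congr; intro ω'' _
    constructor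
    · rintro ⟨h1, h2⟩ j _ hj2
      rcases Nat.lt_succ_iff_lt_or_eq.mp (Nat.lt_succ_of_le hj2) with hj | hj
      · exact h1 j (by rw [Fin.le_def, hc]; omega)
      · have : j = k.succ := Fin.ext (by rw [hs]; omega)
        rw [this]; exact h2
    · intro h
      refine ⟨fun j hj => h j (Nat.zero_le _) ?_, h k.succ (Nat.zero_le _) (by omega)⟩
      rw [Fin.le_def, hc] at hj; omega
  have e2 : (univ.filter (fun ω'' : Fin (N + 1) → X => ω'' k.castSucc = ω k.castSucc))
      = (univ.filter (fun ω'' : Fin (N + 1) → X =>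
        ∀ j : Fin (N + 1), m ≤ (j : ℕ) → (j : ℕ) ≤ m → ω'' j = ω j)) := by
    apply Finset.filter_congr; intro ω'' _
    constructor
    · intro h j h1 h2
      have : j = k.castSucc := Fin.ext (by rw [hc]; omega)
      rw [this]; exact h
    · intro h; exact h k.castSucc (by omega) (by omega)
  have e3 : (univ.filter (fun ω'' : Fin (N + 1) → X =>
      ω'' k.castSucc = ω k.castSucc ∧ ω'' k.succ = ω k.succ))
      = (univ.filter (fun ω'' : Fin (N + 1) → X =>
        ∀ j : Fin (N + 1), m ≤ (j : ℕ) → (j : ℕ) ≤ m + 1 → ω'' j = ω j)) := by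
    apply Finset.filter_congr; intro ω'' _
    constructor
    · rintro ⟨h1, h2⟩ j hj1 hj2
      rcases Nat.eq_or_lt_of_le hj1 with hj | hj
      · have : j = k.castSucc := Fin.ext (by rw [hc]; omega)
        rw [this]; exact h1
      · have : j = k.succ := Fin.ext (by rw [hs]; omega)
        rw [this]; exact h2
    · intro h
      exact ⟨h k.castSucc (by omega) (by omega), h k.succ (by omega) (by omega)⟩
  have e4 : (univ.filter (fun ω'' : Fin (N + 1) → X => ∀ j, j ≤ k.castSucc → ω'' j = ω j))
      = (univ.filter (fun ω'' : Fin (N + 1) → X =>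
        ∀ j : Fin (N + 1), 0 ≤ (j : ℕ) → (j : ℕ) ≤ m → ω'' j = ω j)) := by
    apply Finset.filter_congr; intro ω'' _
    constructor
    · intro h j _ hj; exact h j (by rw [Fin.le_def, hc]; omega)
    · intro h j hj; exact h j (Nat.zero_le _) (by rw [Fin.le_def, hc] at hj; omega)
  rw [e1, e2, e3, e4] at H
  exact H

end Aux
section Aux2
variable {X : Type*} [Fintype X] [DecidableEq X] {N : ℕ}

/-- Decompose a `[t,m]` segment sum over the possible pasts. -/
lemma seg_decomp (pbar : (Fin (N + 1) → X) → ℝ) {t m : ℕ} (htm : t ≤ m)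
    (ω : Fin (N + 1) → X) :
    segS pbar t m ω = ∑ ρ ∈ univ.filter (fun ρ : Fin (N + 1) → X =>
      ∀ j : Fin (N + 1), t ≤ (j : ℕ) → ρ j = ω j), segS pbar 0 m ρ := by
  classical
  have hmaps : ∀ ω'' ∈ univ.filter (fun ω'' : Fin (N + 1) → X =>
      ∀ j : Fin (N + 1), t ≤ (j : ℕ) → (j : ℕ) ≤ m → ω'' j = ω j),
      (fun j : Fin (N + 1) => if t ≤ (j : ℕ) then ω j else ω'' j) ∈
        univ.filter (fun ρ : Fin (N + 1) → X => ∀ j : Fin (N + 1), t ≤ (j : ℕ) → ρ j = ω j) := by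
    intro ω'' _; simp only [mem_filter, mem_univ, true_and]
    intro j hj; rw [if_pos hj]
  rw [segS, ← Finset.sum_fiberwise_of_maps_to hmaps pbar]
  refine Finset.sum_congr rfl fun ρ hρ => ?_
  simp only [mem_filter, mem_univ, true_and] at hρ
  unfold segS
  refine Finset.sum_congr ?_ fun _ _ => rfl
  ext ω''
  simp only [mem_filter, mem_univ, true_and]
  constructor
  · rintro ⟨h1, h2⟩ j _ hj
    by_cases hc : t ≤ (j : ℕ)
    · rw [h1 j hc hj, hρ j hc]
    · have := congrFun h2 j
      simp only [if_neg hc] at this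
      rw [this]
  · intro h
    constructor
    · intro j h1 h2
      rw [h j (Nat.zero_le _) h2, hρ j h1]
    · funext j
      by_cases hc : t ≤ (j : ℕ)
      · simp only [if_pos hc]
        exact (hρ j hc).symm
      · simp only [if_neg hc]
        exact h j (Nat.zero_le _) (by omega)

/-- Markov step for segment sums: summing the Markov identity over pasts. -/
lemma seg_step {pbar : (Fin (N + 1) → X) → ℝ} (hmarkov : IsMarkovChain pbar)
    {t m : ℕ} (htm : t ≤ m) (hm : m < N) (ω : Fin (N + 1) → X) :
    segS pbar t (m + 1) ω * segS pbar m m ω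
      = segS pbar m (m + 1) ω * segS pbar t m ω := by
  rw [seg_decomp pbar htm ω, seg_decomp pbar (htm.trans (Nat.le_succ m)) ω,
    Finset.sum_mul, Finset.mul_sum]
  refine Finset.sum_congr rfl fun ρ hρ => ?_
  simp only [mem_filter, mem_univ, true_and] at hρ
  have h1 : segS pbar m m ω = segS pbar m m ρ :=
    segS_congr pbar fun j hj _ => (hρ j (htm.trans hj)).symm
  have h2 : segS pbar m (m + 1) ω = segS pbar m (m + 1) ρ :=
    segS_congr pbar fun j hj _ => (hρ j (htm.trans hj)).symm
  rw [h1, h2, hm_step hmarkov hm ρ]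

/-- The key factorization: past and future are conditionally independent given the present. -/
lemma phi {pbar : (Fin (N + 1) → X) → ℝ} (hpos : ∀ ω, 0 ≤ pbar ω)
    (hmarkov : IsMarkovChain pbar) (t : ℕ) :
    ∀ m : ℕ, t ≤ m → m ≤ N → ∀ ω : Fin (N + 1) → X,
      segS pbar 0 m ω * segS pbar t t ω = segS pbar t m ω * segS pbar 0 t ω := by
  intro m htm
  induction m, htm using Nat.le_induction with
  | base => intro _ ω; rw [mul_comm]
  | succ m htm ih =>
    intro hmN ω
    have hm : m < N := hmN
    by_cases hT : segS pbar m m ω = 0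
    · have hL : segS pbar 0 (m + 1) ω = 0 := by
        apply Finset.sum_eq_zero
        intro ω'' hω''
        simp only [mem_filter, mem_univ, true_and] at hω''
        exact segS_zero hpos hT fun j hj1 hj2 => hω'' j (Nat.zero_le _) (by omega)
      have hR : segS pbar t (m + 1) ω = 0 := by
        apply Finset.sum_eq_zero
        intro ω'' hω''
        simp only [mem_filter, mem_univ, true_and] at hω''
        exact segS_zero hpos hT fun j hj1 hj2 => hω'' j (by omega) (by omega)
      rw [hL, hR, zero_mul, zero_mul]
    · have ihm := ih (le_of_lt hm) ω
      have hms := hm_step hmarkov hm ω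
      have hss := seg_step hmarkov htm hm ω
      have key : segS pbar 0 (m + 1) ω * segS pbar t t ω * segS pbar m m ω
          = segS pbar t (m + 1) ω * segS pbar 0 t ω * segS pbar m m ω := by
        linear_combination segS pbar t t ω * hms + segS pbar m (m + 1) ω * ihm
          - segS pbar 0 t ω * hss
      exact mul_right_cancel₀ hT key

lemma theta {pbar : (Fin (N + 1) → X) → ℝ} (hpos : ∀ ω, 0 ≤ pbar ω)
    (hmarkov : IsMarkovChain pbar) {t : ℕ} (ht : t ≤ N) (ω : Fin (N + 1) → X) :
    pbar ω * segS pbar t t ω = segS pbar t N ω * segS pbar 0 t ω := by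
  have := phi hpos hmarkov t N ht le_rfl ω
  rwa [segS_all] at this

end Aux2
set_option linter.unusedSectionVars false

section Aux3
variable {X : Type*} [Fintype X] [DecidableEq X] {N : ℕ}

/-- Splice two trajectories at time `t`: follow `a` up to time `t`, then `b`. -/
def splice {X : Type*} {N : ℕ} (t : ℕ) (a b : Fin (N + 1) → X) : Fin (N + 1) → X :=
  fun j => if (j : ℕ) ≤ t then a j else b j

lemma splice_apply_le (t : ℕ) (a b : Fin (N + 1) → X) (j : Fin (N + 1)) (h : (j : ℕ) ≤ t) :
    splice t a b j = a j := if_pos h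

lemma splice_apply_gt (t : ℕ) (a b : Fin (N + 1) → X) (j : Fin (N + 1)) (h : ¬ (j : ℕ) ≤ t) :
    splice t a b j = b j := if_neg h

lemma splice_splice (t : ℕ) (a b : Fin (N + 1) → X) :
    splice t (splice t a b) (splice t b a) = a := by
  funext j
  by_cases h : (j : ℕ) ≤ t <;> simp [splice, h]

/-- The crossing identity: swapping pasts of two trajectories that agree at time `t`
does not change the product of the densities, for a Markov chain. -/
lemma star {pbar : (Fin (N + 1) → X) → ℝ} (hpos : ∀ ω, 0 ≤ pbar ω)
    (hmarkov : IsMarkovChain pbar) {t : ℕ} (ht : t ≤ N) {ω ω' : Fin (N + 1) → X}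
    (hagree : ∀ j : Fin (N + 1), (j : ℕ) = t → ω j = ω' j) :
    pbar (splice t ω ω') * pbar (splice t ω' ω) = pbar ω * pbar ω' := by
  have c1 : segS pbar t t (splice t ω ω') = segS pbar t t ω :=
    segS_congr pbar fun j h1 h2 => splice_apply_le t ω ω' j h2
  have c1' : segS pbar t t (splice t ω' ω) = segS pbar t t ω :=
    segS_congr pbar fun j h1 h2 => by
      rw [splice_apply_le t ω' ω j h2]
      exact (hagree j (le_antisymm h2 h1)).symm
  have c2 : segS pbar t t ω' = segS pbar t t ω :=
    segS_congr pbar fun j h1 h2 => (hagree j (le_antisymm h2 h1)).symm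
  have c3 : segS pbar t N (splice t ω ω') = segS pbar t N ω' :=
    segS_congr pbar fun j h1 h2 => by
      by_cases hc : (j : ℕ) ≤ t
      · rw [splice_apply_le t ω ω' j hc]
        exact hagree j (le_antisymm hc h1)
      · rw [splice_apply_gt t ω ω' j hc]
  have c4 : segS pbar 0 t (splice t ω ω') = segS pbar 0 t ω :=
    segS_congr pbar fun j h1 h2 => splice_apply_le t ω ω' j h2
  have c5 : segS pbar t N (splice t ω' ω) = segS pbar t N ω :=
    segS_congr pbar fun j h1 h2 => by
      by_cases hc : (j : ℕ) ≤ t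
      · rw [splice_apply_le t ω' ω j hc]
        exact (hagree j (le_antisymm hc h1)).symm
      · rw [splice_apply_gt t ω' ω j hc]
  have c6 : segS pbar 0 t (splice t ω' ω) = segS pbar 0 t ω' :=
    segS_congr pbar fun j h1 h2 => splice_apply_le t ω' ω j h2
  by_cases hS : segS pbar t t ω = 0
  · have h1 : pbar ω = 0 := segS_zero hpos hS fun _ _ _ => rfl
    have h2 : pbar (splice t ω ω') = 0 := segS_zero hpos hS fun j hj1 hj2 =>
      splice_apply_le t ω ω' j hj2
    rw [h1, h2]; ring
  · have ts := theta hpos hmarkov ht (splice t ω ω')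
    rw [c1, c3, c4] at ts
    have ts' := theta hpos hmarkov ht (splice t ω' ω)
    rw [c1', c5, c6] at ts'
    have tw := theta hpos hmarkov ht ω
    have tw' := theta hpos hmarkov ht ω'
    rw [c2] at tw'
    have key : (pbar (splice t ω ω') * pbar (splice t ω' ω))
          * (segS pbar t t ω * segS pbar t t ω)
        = (pbar ω * pbar ω') * (segS pbar t t ω * segS pbar t t ω) := by
      linear_combination (pbar (splice t ω' ω) * segS pbar t t ω) * ts
        + (segS pbar t N ω' * segS pbar 0 t ω) * ts'
        - (pbar ω' * segS pbar t t ω) * tw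
        - (segS pbar t N ω * segS pbar 0 t ω) * tw'
    exact mul_right_cancel₀ (mul_ne_zero hS hS) key

end Aux3
section Aux4
variable {X : Type*} [Fintype X] [DecidableEq X] {N : ℕ}

lemma isMarkovChain_smul {q : (Fin (N + 1) → X) → ℝ} (h : IsMarkovChain q) (c : ℝ) :
    IsMarkovChain (fun ω => q ω * c) := by
  intro k x y
  have H := h k x y
  simp only [← Finset.sum_mul]
  linear_combination (c * c) * H

lemma isMarkovChain_mul_exp {pbar : (Fin (N + 1) → X) → ℝ} (hpos : ∀ ω, 0 ≤ pbar ω)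
    (hmarkov : IsMarkovChain pbar) (f : Fin N → X → X → ℝ) :
    IsMarkovChain (fun ω => Real.exp (∑ k, f k (ω k.castSucc) (ω k.succ)) * pbar ω) := by
  intro k x y
  simp only
  rw [Finset.sum_mul_sum, Finset.sum_mul_sum, ← Finset.sum_product', ← Finset.sum_product']
  refine Finset.sum_nbij'
    (fun p => (splice (k : ℕ) p.2 p.1, splice (k : ℕ) p.1 p.2))
    (fun p => (splice (k : ℕ) p.2 p.1, splice (k : ℕ) p.1 p.2)) ?_ ?_ ?_ ?_ ?_
  · rintro ⟨ω, ω'⟩ hp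
    simp only [Finset.mem_product, Finset.mem_filter, Finset.mem_univ, true_and] at hp ⊢
    obtain ⟨⟨hA1, hA2⟩, hB⟩ := hp
    refine ⟨⟨?_, ?_⟩, ?_⟩
    · rw [splice_apply_le (k : ℕ) ω' ω k.castSucc (by simp)]
      exact hB
    · rw [splice_apply_gt (k : ℕ) ω' ω k.succ (by simp)]
      exact hA2
    · intro j hj
      rw [splice_apply_le (k : ℕ) ω ω' j (by simpa [Fin.le_def] using hj)]
      exact hA1 j hj
  · rintro ⟨α, β⟩ hp
    simp only [Finset.mem_product, Finset.mem_filter, Finset.mem_univ, true_and] at hp ⊢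
    obtain ⟨⟨hC1, hC2⟩, hD⟩ := hp
    refine ⟨⟨fun j hj => ?_, ?_⟩, ?_⟩
    · rw [splice_apply_le (k : ℕ) β α j (by simpa [Fin.le_def] using hj)]
      exact hD j hj
    · rw [splice_apply_gt (k : ℕ) β α k.succ (by simp)]
      exact hC2
    · rw [splice_apply_le (k : ℕ) α β k.castSucc (by simp)]
      exact hC1
  · rintro ⟨ω, ω'⟩ _
    exact Prod.ext (splice_splice (k : ℕ) ω ω') (splice_splice (k : ℕ) ω' ω)
  · rintro ⟨α, β⟩ _
    exact Prod.ext (splice_splice (k : ℕ) α β) (splice_splice (k : ℕ) β α)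
  · rintro ⟨ω, ω'⟩ hp
    simp only [Finset.mem_product, Finset.mem_filter, Finset.mem_univ, true_and] at hp
    obtain ⟨⟨hA1, hA2⟩, hB⟩ := hp
    dsimp only
    have hx : ω k.castSucc = ω' k.castSucc := by rw [hA1 k.castSucc le_rfl, hB]
    have hpb : pbar (splice (k : ℕ) ω' ω) * pbar (splice (k : ℕ) ω ω')
        = pbar ω' * pbar ω :=
      star hpos hmarkov (le_of_lt k.isLt) fun j hj => by
        have hj' : j = k.castSucc := Fin.ext (by simpa using hj)
        rw [hj']; exact hx.symm
    have hF : (∑ k', f k' (splice (k : ℕ) ω' ω k'.castSucc) (splice (k : ℕ) ω' ω k'.succ))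
          + (∑ k', f k' (splice (k : ℕ) ω ω' k'.castSucc) (splice (k : ℕ) ω ω' k'.succ))
        = (∑ k', f k' (ω k'.castSucc) (ω k'.succ))
          + (∑ k', f k' (ω' k'.castSucc) (ω' k'.succ)) := by
      rw [← Finset.sum_add_distrib, ← Finset.sum_add_distrib]
      refine Finset.sum_congr rfl fun k' _ => ?_
      by_cases h1 : ((k' : ℕ) + 1) ≤ (k : ℕ)
      · rw [splice_apply_le (k : ℕ) ω' ω k'.castSucc (by simp; omega),
          splice_apply_le (k : ℕ) ω' ω k'.succ (by simp; omega),
          splice_apply_le (k : ℕ) ω ω' k'.castSucc (by simp; omega),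
          splice_apply_le (k : ℕ) ω ω' k'.succ (by simp; omega)]
        ring
      · by_cases h2 : (k' : ℕ) ≤ (k : ℕ)
        · have hkk : k'.castSucc = k.castSucc := Fin.ext (by simp; omega)
          rw [splice_apply_le (k : ℕ) ω' ω k'.castSucc (by simp; omega),
            splice_apply_gt (k : ℕ) ω' ω k'.succ (by simp; omega),
            splice_apply_le (k : ℕ) ω ω' k'.castSucc (by simp; omega),
            splice_apply_gt (k : ℕ) ω ω' k'.succ (by simp; omega), hkk, hx]
        · rw [splice_apply_gt (k : ℕ) ω' ω k'.castSucc (by simp; omega),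
            splice_apply_gt (k : ℕ) ω' ω k'.succ (by simp; omega),
            splice_apply_gt (k : ℕ) ω ω' k'.castSucc (by simp; omega),
            splice_apply_gt (k : ℕ) ω ω' k'.succ (by simp; omega)]
    have e1 : ∀ (a b c d : ℝ),
        (Real.exp a * c) * (Real.exp b * d) = Real.exp (a + b) * (c * d) := by
      intro a b c d; rw [Real.exp_add]; ring
    rw [e1, e1, hF, hpb]
    ring

end Aux4

/-- If `P̄` is a Markov chain on a finite product and `dP/dP̄ = exp(Σ_k f_k(x_k,x_{k+1}))/Z`
with pairwise factors over consecutive coordinates and `Z` the normalizing constant, then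
`P` is also a Markov chain. -/
theorem markov_of_pairwise_density {X : Type*} [Fintype X] [DecidableEq X] {N : ℕ}
    (pbar : (Fin (N + 1) → X) → ℝ) (hpos : ∀ ω, 0 ≤ pbar ω) (hsum : ∑ ω, pbar ω = 1)
    (hmarkov : IsMarkovChain pbar)
    (f : Fin N → X → X → ℝ) (Z : ℝ)
    (hZ : Z = ∑ ω : Fin (N + 1) → X,
      Real.exp (∑ k, f k (ω k.castSucc) (ω k.succ)) * pbar ω) :
    IsMarkovChain (fun ω => Real.exp (∑ k, f k (ω k.castSucc) (ω k.succ)) * pbar ω / Z) := by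
  have h1 : (fun ω : Fin (N + 1) → X =>
        Real.exp (∑ k, f k (ω k.castSucc) (ω k.succ)) * pbar ω / Z)
      = fun ω => (Real.exp (∑ k, f k (ω k.castSucc) (ω k.succ)) * pbar ω) * Z⁻¹ := by
    funext ω
    rw [div_eq_mul_inv]
  rw [h1]
  exact isMarkovChain_smul (isMarkovChain_mul_exp hpos hmarkov f) Z⁻¹
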